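/- Let H = (V,E) be a hypergraph and j ≥ 0. Let G_j be the simple graph whose vertex set is the hyperedge set E of H, with two hyperedges adjacent in G_j if and only if their intersection contains at least j+1 vertices, and let Φ_{G_j} be the zeon independent-set representation of G_j. Then for every k ∈ ℕ, Φ_{G_j}^k = k! · Σ_S ζ_{N(S)} ⊗ ε_S, where the sum is over all k-element subsets S ⊆ E that are j-intersecting matchings of H (i.e. |e ∩ f| ≤ j for all distinct e, f ∈ S), N(S) is the set of edges of G_j'' incident with S, and ε_S = ∏_{e∈S} ε_e. In particular, the index sets of nonzero ε_S-terms of Φ_{G_j}^k are exactly the j-intersecting matchings of H on k hyperedges. -/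

import Mathlib

/-! In the regular representation, blades multiply by
`(ζ_I ⊗ ε_J) (ζ_I' ⊗ ε_J') = ζ_{I ∪ I'} ⊗ ε_{J ∪ J'}` if `I ∩ I' = ∅`, and `0`
otherwise.
Every vertex of `G''` lies on an edge, and two vertices share an edge of `G''` iff they are
equal or adjacent in `G`; so for an independent set `S`, `ψ(w) ζ_{N(S)} ≠ 0` iff `S ∪ {w}`
is an independent set of size `|S| + 1`. By induction `Φ_G^k` is therefore `k!` times the sum of `ζ_{N(S)} ⊗ ε_S` over the
`k`-element independent sets `S`, each arising from its `k!` orderings. The independent sets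
of `G_j` are exactly the `j`-intersecting matchings of `H`, and distinct `S` give distinct
basis blades, which identifies the nonzero `ε_S`-coefficients. -/

open Finset

/-- Regular-representation action of the zeon blade `ζ_I` (product of the zeon generators
`ζ_i`, `i ∈ I`, satisfying `ζ_i ^ 2 = 0`) on the coefficient space of the algebra
`𝔷 ⊗ 𝔦`:  a multiplication by `ζ_I` sends the basis blade indexed by `(S, T)` to the one
indexed by `(I ∪ S, T)` when `I` and `S` are disjoint, and to `0` otherwise. -/
noncomputable def zetaBlade (α γ : Type*) [DecidableEq α] (I : Finset α) :
    Module.End ℝ ((Finset α × γ) → ℝ) where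
  toFun c := fun p => if I ⊆ p.1 then c (p.1 \ I, p.2) else 0
  map_add' x y := by
    funext p
    by_cases h : I ⊆ p.1 <;> simp [h]
  map_smul' r x := by
    funext p
    by_cases h : I ⊆ p.1 <;> simp [h]

/-- Regular-representation action of the idem-Clifford blade `ε_J` (product of the
idempotent generators `ε_j`, `j ∈ J`, satisfying `ε_j ^ 2 = ε_j`) on the coefficient
space: multiplication by `ε_J` sends the basis blade indexed by `(S, T)` to the one
indexed by `(S, T ∪ J)`. -/
noncomputable def epsBlade (γ β : Type*) [DecidableEq β] (J : Finset β) :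
    Module.End ℝ ((γ × Finset β) → ℝ) where
  toFun c := fun p => ∑ T ∈ p.2.powerset.filter (fun T => T ∪ J = p.2), c (p.1, T)
  map_add' x y := by
    funext p
    simp [Finset.sum_add_distrib]
  map_smul' r x := by
    funext p
    simp [Finset.mul_sum]

/-- The graph `G_j` on the hyperedge set of `H`: two (distinct) hyperedges are adjacent
iff their intersection contains at least `j + 1` vertices. -/
def interGraph {n m : ℕ} (E : Fin m → Finset (Fin n)) (j : ℕ) : SimpleGraph (Fin m) where
  Adj a b := a ≠ b ∧ j + 1 ≤ (E a ∩ E b).card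
  symm := by
    constructor
    intro a b h
    exact ⟨h.1.symm, by rw [Finset.inter_comm]; exact h.2⟩
  loopless := by
    constructor
    intro a h
    exact h.1 rfl

/-- The zeon independent-set representation `Φ_G = Σ_w ψ(w) ⊗ ε_w` of a graph on vertex
set `Fin m`, where `E''` is the edge set of `G''` (the graph `G` with a loop added at
each isolated vertex) and `ψ(w) = ∏_{e ∈ E'', w ∈ e} ζ_e`. -/
noncomputable def PhiInd {m : ℕ} (E'' : Finset (Sym2 (Fin m))) :
    Module.End ℝ ((Finset (Sym2 (Fin m)) × Finset (Fin m)) → ℝ) :=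
  ∑ w : Fin m,
    zetaBlade (Sym2 (Fin m)) (Finset (Fin m)) (E''.filter (fun e => w ∈ e)) *
      epsBlade (Finset (Sym2 (Fin m))) (Fin m) {w}

open scoped Classical

section Blades

variable {α β γ : Type*} [DecidableEq α] [DecidableEq β]

theorem zetaBlade_apply (I : Finset α) (c : Finset α × γ → ℝ) (p : Finset α × γ) :
    zetaBlade α γ I c p = if I ⊆ p.1 then c (p.1 \ I, p.2) else 0 := rfl

theorem epsBlade_apply (J : Finset β) (c : γ × Finset β → ℝ) (p : γ × Finset β) :
    epsBlade γ β J c p = ∑ T ∈ p.2.powerset.filter (fun T => T ∪ J = p.2), c (p.1, T) := rfl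

theorem zetaBlade_mul_zetaBlade (I I' : Finset α) :
    zetaBlade α γ I * zetaBlade α γ I' =
      if Disjoint I I' then zetaBlade α γ (I ∪ I') else 0 := by
  ext c p
  split_ifs with hd
  · simp only [Module.End.mul_apply, zetaBlade_apply, subset_sdiff, union_subset_iff,
      sdiff_sdiff_left, sup_eq_union, disjoint_comm.mp hd, and_true, ite_and]
  · simp [zetaBlade_apply, subset_sdiff, disjoint_comm, hd]

theorem epsBlade_mul_epsBlade (J J' : Finset β) :
    epsBlade γ β J * epsBlade γ β J' = epsBlade γ β (J ∪ J') := by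
  ext c ⟨x, U⟩
  simp only [Module.End.mul_apply, epsBlade_apply]
  rw [sum_comm' (t' := U.powerset.filter (fun T => T ∪ (J ∪ J') = U))
    (s' := fun T' => {T' ∪ J'})]
  · simp
  · intro T T'
    simp only [mem_filter, mem_powerset, mem_singleton]
    constructor
    · rintro ⟨⟨-, rfl⟩, -, rfl⟩
      exact ⟨rfl, subset_union_left.trans subset_union_left,
        by rw [union_assoc, union_comm J J']⟩
    · rintro ⟨rfl, -, rfl⟩
      exact ⟨⟨union_subset_union_right subset_union_right,
        by rw [union_assoc, union_comm J J']⟩, subset_union_left, rfl⟩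

theorem zetaBlade_mul_epsBlade_comm (I : Finset α) (J : Finset β) :
    zetaBlade α (Finset β) I * epsBlade (Finset α) β J
      = epsBlade (Finset α) β J * zetaBlade α (Finset β) I := by
  ext c p
  by_cases h : I ⊆ p.1 <;> simp [zetaBlade_apply, epsBlade_apply, h]

theorem zetaBlade_empty : zetaBlade α γ ∅ = 1 := by
  ext c p
  simp [zetaBlade_apply]

theorem epsBlade_empty : epsBlade γ β ∅ = 1 := by
  ext c p
  rw [epsBlade_apply, show p.2.powerset.filter (fun T => T ∪ ∅ = p.2) = {p.2} by
    ext T; simp [subset_antisymm_iff]]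
  simp

theorem blade_mul_blade (I I' : Finset α) (J J' : Finset β) :
    zetaBlade α (Finset β) I * epsBlade (Finset α) β J *
      (zetaBlade α (Finset β) I' * epsBlade (Finset α) β J') =
    if Disjoint I I' then
      zetaBlade α (Finset β) (I ∪ I') * epsBlade (Finset α) β (J ∪ J')
    else 0 := by
  rw [mul_assoc, ← mul_assoc (epsBlade _ β J), ← zetaBlade_mul_epsBlade_comm, mul_assoc,
    ← mul_assoc, zetaBlade_mul_zetaBlade, epsBlade_mul_epsBlade]
  split_ifs <;> simp

theorem blade_apply_single (I : Finset α) (J : Finset β) (q : Finset α × Finset β) :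
    (zetaBlade α (Finset β) I * epsBlade (Finset α) β J)
        (fun p => if p = (∅, ∅) then 1 else 0) q = if q = (I, J) then 1 else 0 := by
  obtain ⟨U, W⟩ := q
  simp only [Module.End.mul_apply, zetaBlade_apply, epsBlade_apply, Prod.mk.injEq,
    sdiff_eq_empty_iff_subset, ite_and]
  by_cases hU : U = I
  · subst hU
    simp [eq_comm]
  · have hIU : ¬ (I ⊆ U ∧ U ⊆ I) := fun h => hU (subset_antisymm h.2 h.1)
    simp_all

theorem exists_nsmul_sum_blade_apply_ne_zero_iff {c : ℕ} (hc : c ≠ 0) (F : Finset (Finset β))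
    (N : Finset β → Finset α) (S : Finset β) :
    (∃ T, (c • ∑ J ∈ F, zetaBlade α (Finset β) (N J) * epsBlade (Finset α) β J)
        (fun p => if p = (∅, ∅) then 1 else 0) (T, S) ≠ 0) ↔ S ∈ F := by
  simp only [LinearMap.smul_apply, LinearMap.sum_apply, Pi.smul_apply, Finset.sum_apply,
    blade_apply_single, Prod.mk.injEq, and_comm (a := _ = N _), ite_and, sum_ite_eq]
  constructor
  · rintro ⟨T, hT⟩
    by_contra hS
    simp [hS] at hT
  · intro hS
    exact ⟨N S, by simp [hS, hc]⟩

end Blades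

namespace SimpleGraph

variable {V : Type*} [Fintype V] [DecidableEq V] {G : SimpleGraph V}

variable (G) in
/-- The edge set `E''` of `G''`. -/
noncomputable def edgeFinsetWithIsolatedLoops : Finset (Sym2 V) :=
  univ.filter fun e => e ∈ G.edgeSet ∨ ∃ a, e = Sym2.diag a ∧ ∀ b, ¬ G.Adj a b

theorem mk_mem_edgeFinsetWithIsolatedLoops {a b : V} (h : G.Adj a b) :
    s(a, b) ∈ G.edgeFinsetWithIsolatedLoops := by
  simp [edgeFinsetWithIsolatedLoops, h]

theorem exists_mem_edgeFinsetWithIsolatedLoops (w : V) :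
    ∃ e ∈ G.edgeFinsetWithIsolatedLoops, w ∈ e := by
  by_cases h : ∃ b, G.Adj w b
  · obtain ⟨b, hb⟩ := h
    exact ⟨s(w, b), mk_mem_edgeFinsetWithIsolatedLoops hb, Sym2.mem_mk_left _ _⟩
  · push Not at h
    exact ⟨Sym2.diag w, by simpa [edgeFinsetWithIsolatedLoops] using ⟨w, rfl, h⟩,
      Sym2.mem_mk_left _ _⟩

theorem adj_of_mem_edgeFinsetWithIsolatedLoops {e : Sym2 V}
    (he : e ∈ G.edgeFinsetWithIsolatedLoops) {a b : V} (ha : a ∈ e) (hb : b ∈ e)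
    (hab : a ≠ b) : G.Adj a b := by
  simp only [edgeFinsetWithIsolatedLoops, mem_filter, mem_univ, true_and] at he
  rcases he with he | ⟨c, rfl, -⟩
  · exact adj_iff_exists_edge.mpr ⟨hab, e, he, ha, hb⟩
  · simp only [Sym2.diag, Sym2.mem_iff, or_self] at ha hb
    exact absurd (ha.trans hb.symm) hab

theorem forall_mem_edgeFinsetWithIsolatedLoops_notMem_iff (w : V) (S : Finset V) :
    (∀ e ∈ G.edgeFinsetWithIsolatedLoops, w ∈ e → ∀ b ∈ S, b ∉ e) ↔
      w ∉ S ∧ ∀ b ∈ S, ¬ G.Adj w b := by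
  constructor
  · intro h
    refine ⟨fun hw => ?_, fun b hb hwb => ?_⟩
    · obtain ⟨e, he, hwe⟩ := exists_mem_edgeFinsetWithIsolatedLoops (G := G) w
      exact h e he hwe w hw hwe
    · exact h _ (mk_mem_edgeFinsetWithIsolatedLoops hwb) (Sym2.mem_mk_left _ _) b hb
        (Sym2.mem_mk_right _ _)
  · rintro ⟨hwS, hnadj⟩ e he hwe b hb hbe
    exact hnadj b hb
      (adj_of_mem_edgeFinsetWithIsolatedLoops he hwe hbe (ne_of_mem_of_not_mem hb hwS).symm)

theorem isNIndepSet_insert_iff {k : ℕ} {w : V} {S : Finset V} (hw : w ∉ S) :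
    G.IsNIndepSet (k + 1) (insert w S) ↔ G.IsNIndepSet k S ∧ ∀ b ∈ S, ¬ G.Adj w b := by
  have hne : ∀ b ∈ S, w ≠ b := fun b hb h => hw (h ▸ hb)
  have hnadj : (∀ b ∈ (S : Set V), w ≠ b → ¬ G.Adj w b ∧ ¬ G.Adj b w) ↔
      ∀ b ∈ S, ¬ G.Adj w b :=
    ⟨fun h b hb => (h b hb (hne b hb)).1,
      fun h b hb _ => ⟨h b hb, fun hbw => h b hb hbw.symm⟩⟩
  rw [isNIndepSet_iff, isNIndepSet_iff, card_insert_of_notMem hw, add_left_inj, coe_insert,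
    isIndepSet_iff, isIndepSet_iff, Set.pairwise_insert, hnadj]
  tauto

theorem sum_indepSetFinset_sum_insert [DecidableRel G.Adj] {M : Type*} [AddCommMonoid M]
    (f : Finset V → M) (k : ℕ) :
    ∑ S ∈ G.indepSetFinset k,
        ∑ w ∈ univ.filter (fun w => w ∉ S ∧ ∀ b ∈ S, ¬ G.Adj w b), f (insert w S) =
      (k + 1) • ∑ T ∈ G.indepSetFinset (k + 1), f T := by
  have hcard : ∀ T ∈ G.indepSetFinset (k + 1), ∑ _w ∈ T, f T = (k + 1) • f T :=
    fun T hT => by rw [sum_const, (mem_indepSetFinset_iff.mp hT).card_eq]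
  rw [smul_sum, ← sum_congr rfl hcard, sum_sigma', sum_sigma']
  refine sum_nbij' (fun x => ⟨insert x.2 x.1, x.2⟩) (fun y => ⟨y.1.erase y.2, y.2⟩)
    ?_ ?_ ?_ ?_ fun _ _ => rfl
  · rintro ⟨S, w⟩ h
    simp only [mem_sigma, mem_indepSetFinset_iff, mem_filter, mem_univ, true_and] at h ⊢
    exact ⟨(isNIndepSet_insert_iff h.2.1).mpr ⟨h.1, h.2.2⟩, mem_insert_self _ _⟩
  · rintro ⟨T, w⟩ h
    simp only [mem_sigma, mem_indepSetFinset_iff, mem_filter, mem_univ, true_and] at h ⊢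
    have hT : G.IsNIndepSet (k + 1) (insert w (T.erase w)) := by
      rw [insert_erase h.2]; exact h.1
    rw [isNIndepSet_insert_iff (notMem_erase w T)] at hT
    exact ⟨hT.1, notMem_erase w T, hT.2⟩
  · rintro ⟨S, w⟩ h
    simp only [mem_sigma, mem_filter] at h
    simp [erase_insert h.2.2.1]
  · rintro ⟨T, w⟩ h
    simp [insert_erase (mem_sigma.mp h).2]

end SimpleGraph

theorem indepSetFinset_interGraph {n m : ℕ} (E : Fin m → Finset (Fin n)) (j k : ℕ) :
    (interGraph E j).indepSetFinset k = (univ.powersetCard k).filter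
      (fun S => ∀ a ∈ S, ∀ b ∈ S, a ≠ b → (E a ∩ E b).card ≤ j) := by
  ext S
  simp [SimpleGraph.isNIndepSet_iff, SimpleGraph.isIndepSet_iff, Set.Pairwise, interGraph,
    and_comm]

section IndependentSetRepresentation

open SimpleGraph

variable {m : ℕ}

/-- The blade `ζ_{N(S)} ⊗ ε_S`, where `N(S)` is the set of edges of `E''` incident with `S`. -/
noncomputable def incidenceBlade (E'' : Finset (Sym2 (Fin m))) (S : Finset (Fin m)) :
    Module.End ℝ (Finset (Sym2 (Fin m)) × Finset (Fin m) → ℝ) :=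
  zetaBlade (Sym2 (Fin m)) (Finset (Fin m)) (E''.filter fun e => ∃ w ∈ S, w ∈ e) *
    epsBlade (Finset (Sym2 (Fin m))) (Fin m) S

theorem PhiInd_mul_incidenceBlade (G : SimpleGraph (Fin m)) [DecidableRel G.Adj]
    (S : Finset (Fin m)) :
    PhiInd G.edgeFinsetWithIsolatedLoops * incidenceBlade G.edgeFinsetWithIsolatedLoops S =
      ∑ w ∈ univ.filter (fun w => w ∉ S ∧ ∀ b ∈ S, ¬ G.Adj w b),
        incidenceBlade G.edgeFinsetWithIsolatedLoops (insert w S) := by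
  rw [PhiInd, sum_mul, sum_filter]
  refine sum_congr rfl fun w _ => ?_
  rw [incidenceBlade, blade_mul_blade]
  simp only [disjoint_filter, not_exists, not_and,
    forall_mem_edgeFinsetWithIsolatedLoops_notMem_iff]
  split_ifs
  · rw [incidenceBlade, insert_eq, ← filter_or]
    congr! 3 with e
    simp only [mem_union, mem_singleton, exists_eq_or_imp]
  · rfl

theorem PhiInd_edgeFinsetWithIsolatedLoops_pow (G : SimpleGraph (Fin m))
    [DecidableRel G.Adj] (k : ℕ) :
    PhiInd G.edgeFinsetWithIsolatedLoops ^ k =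
      k.factorial •
        ∑ S ∈ G.indepSetFinset k, incidenceBlade G.edgeFinsetWithIsolatedLoops S := by
  induction k with
  | zero =>
    have h₀ : G.indepSetFinset 0 = {∅} := by ext S; simp +contextual [isNIndepSet_iff]
    simp [h₀, incidenceBlade, zetaBlade_empty, epsBlade_empty]
  | succ k ih =>
    rw [pow_succ', ih, mul_smul_comm, mul_sum,
      sum_congr rfl fun S _ => PhiInd_mul_incidenceBlade G S, Nat.factorial_succ, mul_comm,
      ← smul_smul, ← sum_indepSetFinset_sum_insert]
    -- the two sides differ only in the `Decidable` instance of the inner filter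
    congr!

end IndependentSetRepresentation

theorem j_intersecting_matching_enumeration_general {n m : ℕ} (E : Fin m → Finset (Fin n))
    (j k : ℕ) (E'' : Finset (Sym2 (Fin m)))
    (hE'' : E'' = Finset.univ.filter (fun e : Sym2 (Fin m) =>
      e ∈ (interGraph E j).edgeSet ∨
        ∃ a : Fin m, e = Sym2.diag a ∧ ∀ b : Fin m, ¬ (interGraph E j).Adj a b)) :
    (PhiInd E'' ^ k =
      (Nat.factorial k) •
        ∑ S ∈ ((Finset.univ : Finset (Fin m)).powersetCard k).filter
            (fun S => ∀ a ∈ S, ∀ b ∈ S, a ≠ b → (E a ∩ E b).card ≤ j),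
          zetaBlade (Sym2 (Fin m)) (Finset (Fin m))
              (E''.filter (fun e => ∃ w ∈ S, w ∈ e)) *
            epsBlade (Finset (Sym2 (Fin m))) (Fin m) S) ∧
    ∀ S : Finset (Fin m),
      ((∃ T : Finset (Sym2 (Fin m)),
          (PhiInd E'' ^ k)
            (fun p => if p = ((∅ : Finset (Sym2 (Fin m))), (∅ : Finset (Fin m)))
              then (1 : ℝ) else 0) (T, S) ≠ 0) ↔
        (S.card = k ∧ ∀ a ∈ S, ∀ b ∈ S, a ≠ b → (E a ∩ E b).card ≤ j)) := by
  obtain rfl : E'' = (interGraph E j).edgeFinsetWithIsolatedLoops := by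
    ext e
    simp [hE'', SimpleGraph.edgeFinsetWithIsolatedLoops]
  have hpow := PhiInd_edgeFinsetWithIsolatedLoops_pow (interGraph E j) k
  rw [indepSetFinset_interGraph] at hpow
  unfold incidenceBlade at hpow
  refine ⟨hpow, fun S => ?_⟩
  rw [hpow, exists_nsmul_sum_blade_apply_ne_zero_iff (Nat.factorial_ne_zero k), mem_filter,
    mem_powersetCard_univ]

/-- Let `H` be a hypergraph with (nonempty) hyperedges
`E : Fin m → Finset (Fin n)` (pairwise distinct) and `j ≥ 0`, let `G_j` be the simple
graph on the hyperedge set of `H` in which two hyperedges are adjacent iff they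
intersect in at least `j + 1` vertices, and let `Φ_{G_j}` be the zeon independent-set
representation of `G_j`.  Then for every `k ∈ ℕ`,
`Φ_{G_j}^k = k! Σ_S ζ_{N(S)} ⊗ ε_S`, the sum being over the `k`-element subsets `S` of
the hyperedge set that are `j`-intersecting matchings of `H` (`|e ∩ f| ≤ j` for distinct
`e, f ∈ S`), with `N(S)` the set of edges of `G_j''` incident with `S`; and the index
sets of the nonzero `ε_S`-terms of `Φ_{G_j}^k` are exactly the `j`-intersecting
matchings of `H` on `k` hyperedges. -/
theorem j_intersecting_matching_enumeration {n m : ℕ} (E : Fin m → Finset (Fin n))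
    (hE : ∀ l : Fin m, (E l).Nonempty) (hinj : Function.Injective E)
    (j k : ℕ) (E'' : Finset (Sym2 (Fin m)))
    (hE'' : E'' = Finset.univ.filter (fun e : Sym2 (Fin m) =>
      e ∈ (interGraph E j).edgeSet ∨
        ∃ a : Fin m, e = Sym2.diag a ∧ ∀ b : Fin m, ¬ (interGraph E j).Adj a b)) :
    (PhiInd E'' ^ k =
      (Nat.factorial k) •
        ∑ S ∈ ((Finset.univ : Finset (Fin m)).powersetCard k).filter
            (fun S => ∀ a ∈ S, ∀ b ∈ S, a ≠ b → (E a ∩ E b).card ≤ j),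
          zetaBlade (Sym2 (Fin m)) (Finset (Fin m))
              (E''.filter (fun e => ∃ w ∈ S, w ∈ e)) *
            epsBlade (Finset (Sym2 (Fin m))) (Fin m) S) ∧
    ∀ S : Finset (Fin m),
      ((∃ T : Finset (Sym2 (Fin m)),
          (PhiInd E'' ^ k)
            (fun p => if p = ((∅ : Finset (Sym2 (Fin m))), (∅ : Finset (Fin m)))
              then (1 : ℝ) else 0) (T, S) ≠ 0) ↔
        (S.card = k ∧ ∀ a ∈ S, ∀ b ∈ S, a ≠ b → (E a ∩ E b).card ≤ j)) :=
  j_intersecting_matching_enumeration_general E j k E'' hE''
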